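/- Suppose P' is a Gaussian transition kernel on R^d (and ℓ is the Lebesgue measure) and E is a compact subset of R^d with nonempty interior. Then there exists β(P') ∈ (0,1) such that for all m_0, m_0' ∈ P(E), ‖m_0 P' − m_0' P'‖_TV ≤ β(P') ‖m_0 − m_0'‖_TV. In other words, Assumption (AG) implies part (1) of Assumption (AP). -/

import Mathlib

noncomputable section

open MeasureTheory ProbabilityTheory Filter Real
open scoped ENNReal NNReal

/-- Euclidean state space `ℝ^d`. -/
abbrev Rd (d : ℕ) : Type := EuclideanSpace ℝ (Fin d)

variable {d : ℕ}

/-- A probability density with respect to a reference measure `ℓ`. -/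
def IsDensity (ℓ : Measure (Rd d)) (η : Rd d → ℝ) : Prop :=
  Measurable η ∧ (∀ x, 0 ≤ η x) ∧ ∫ x, η x ∂ℓ = 1

/-- A transition-kernel density with respect to `ℓ`. -/
def IsKernelDensity (ℓ : Measure (Rd d)) (p : Rd d → Rd d → ℝ) : Prop :=
  Measurable (Function.uncurry p) ∧ (∀ x y, 0 ≤ p x y) ∧ ∀ x, ∫ y, p x y ∂ℓ = 1

/-- Measurable functions bounded by one. -/
def B1 (S : Type*) [MeasurableSpace S] : Set (S → ℝ) :=
  {f | Measurable f ∧ ∀ x, |f x| ≤ 1}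

/-- Total-variation distance, as the supremum over `B1` test functions. -/
def tvDist {S : Type*} [MeasurableSpace S] (μ ν : Measure S) : ℝ :=
  ⨆ f : B1 S, |∫ x, (f : S → ℝ) x ∂μ - ∫ x, (f : S → ℝ) x ∂ν|

/-- Total-variation distance between densities. -/
def tvDen (ℓ : Measure (Rd d)) (g h : Rd d → ℝ) : ℝ := ∫ x, |g x - h x| ∂ℓ

/-- Sup-norm distance between densities. -/
def supDist (g h : Rd d → ℝ) : ℝ := ⨆ x, |g x - h x|

/-- The transition kernel `M^Ψ` driven by the potential field `Ψ`. -/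
def Mker {E : Set (Rd d)} (Q Q0 : Kernel E E) (lam : ℝ) (Ψ : Rd d → ℝ) (x : E) :
    Measure E :=
  (Q x).withDensity (fun y => ENNReal.ofReal (Real.exp (-(lam * max (Ψ x.1 - Ψ y.1) 0))))
    + ENNReal.ofReal (1 - ∫ z, Real.exp (-(lam * max (Ψ x.1 - Ψ z.1) 0)) ∂(Q x)) • Q0 x

/-- `m ↦ m M^Ψ`. -/
def mStep {E : Set (Rd d)} (Q Q0 : Kernel E E) (lam : ℝ) (Ψ : Rd d → ℝ)
    (m : Measure E) : Measure E :=
  m.bind (Mker Q Q0 lam Ψ)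

/-- The density of `η R_m`, where `R_m = (1-ε) P + ε m P'`. -/
def etaStep {E : Set (Rd d)} (ℓ : Measure (Rd d)) (p p' : Rd d → Rd d → ℝ) (ε : ℝ)
    (m : Measure E) (η : Rd d → ℝ) : Rd d → ℝ :=
  fun y => (1 - ε) * ∫ x, η x * p x y ∂ℓ + ε * ∫ x, p' x.1 y ∂m

/-- One step `Φ(m, η) = (m M^η, η R_m)` of the nonlinear dynamics. -/
def Phi {E : Set (Rd d)} (Q Q0 : Kernel E E) (lam : ℝ) (ℓ : Measure (Rd d))
    (p p' : Rd d → Rd d → ℝ) (ε : ℝ) :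
    Measure E × (Rd d → ℝ) → Measure E × (Rd d → ℝ) :=
  fun q => (mStep Q Q0 lam q.2 q.1, etaStep ℓ p p' ε q.1 q.2)

/-- Empirical measure of `N` points. -/
def empMeas {E : Set (Rd d)} {N : ℕ} (x : Fin N → E) : Measure E :=
  (N : ℝ≥0∞)⁻¹ • ∑ j, Measure.dirac (x j)

/-- The potential field sequence `η_k^N` generated by the `N`-particle system. -/
def etaSeq {E : Set (Rd d)} (ℓ : Measure (Rd d)) (p p' : Rd d → Rd d → ℝ) (ε : ℝ)
    {Ω : Type*} {N : ℕ} (X : ℕ → Ω → (Fin N → E)) (η0 : Rd d → ℝ) :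
    ℕ → Ω → Rd d → ℝ
  | 0 => fun _ => η0
  | k + 1 => fun ω => etaStep ℓ p p' ε (empMeas (X k ω)) (etaSeq ℓ p p' ε X η0 k ω)

/-- History filtration of a process. -/
def histF {Ω α : Type*} [MeasurableSpace α] (X : ℕ → Ω → α) (k : ℕ) :
    MeasurableSpace Ω :=
  ⨆ i : Fin (k + 1), MeasurableSpace.comap (X i.1) inferInstance

/-- The `N`-interacting-particle system: conditionally on the past, the particles
move independently according to `M^{η_k^N}`. -/
structure IsParticleSystem {E : Set (Rd d)} (Q Q0 : Kernel E E) (lam : ℝ)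
    (ℓ : Measure (Rd d)) (p p' : Rd d → Rd d → ℝ) (ε : ℝ) {N : ℕ}
    {Ω : Type*} [MeasurableSpace Ω] (Pr : Measure Ω)
    (X : ℕ → Ω → (Fin N → E)) (η0 : Rd d → ℝ) : Prop where
  prob : IsProbabilityMeasure Pr
  meas_X : ∀ k, Measurable (X k)
  density_η0 : IsDensity ℓ η0
  condLaw : ∀ (k : ℕ) (A : Set (Fin N → E)), MeasurableSet A →
    ∀ B : Set Ω, MeasurableSet[histF X k] B →
      (Pr (B ∩ X (k + 1) ⁻¹' A)).toReal =
        ∫ ω in B, ((Measure.pi fun j =>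
            Mker Q Q0 lam (etaSeq ℓ p p' ε X η0 k ω) (X k ω j)) A).toReal ∂Pr

/-- The potential field sequence `η̃_k^N` of the approximating particle scheme. -/
def etaTildeSeq {E : Set (Rd d)} (ℓ : Measure (Rd d)) (p p' : Rd d → Rd d → ℝ) (ε : ℝ)
    {Ω : Type*} {N : ℕ} (X : ℕ → Ω → (Fin N → E)) (Y : ℕ → Ω → (Fin N → Rd d))
    (η0 : Rd d → ℝ) : ℕ → Ω → Rd d → ℝ
  | 0 => fun _ => η0
  | k + 1 => fun ω y =>
      (1 - ε) * ((N : ℝ)⁻¹ * ∑ i, p (Y (k + 1) ω i) y)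
        + ε * ((N : ℝ)⁻¹ * ∑ j, p' (X k ω j).1 y)

/-- The approximating particle scheme: `X̃` are the particles, `Y` the auxiliary
samples used to approximate the potential field. -/
structure IsSchemeSystem {E : Set (Rd d)} (Q Q0 : Kernel E E) (lam : ℝ)
    (ℓ : Measure (Rd d)) (p p' : Rd d → Rd d → ℝ) (ε : ℝ)
    (m0 : Measure E) (η0 : Rd d → ℝ) {N : ℕ}
    {Ω : Type*} [MeasurableSpace Ω] (Pr : Measure Ω)
    (X : ℕ → Ω → (Fin N → E)) (Y : ℕ → Ω → (Fin N → Rd d)) : Prop where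
  prob : IsProbabilityMeasure Pr
  meas_X : ∀ k, Measurable (X k)
  meas_Y : ∀ k, Measurable (Y k)
  init_indep : iIndepFun (fun i ω => X 0 ω i) Pr
  init_law : ∀ i, Pr.map (fun ω => X 0 ω i) = m0
  condLaw : ∀ (k : ℕ) (A : Set ((Fin N → E) × (Fin N → Rd d))), MeasurableSet A →
    ∀ B : Set Ω, MeasurableSet[histF X k ⊔ histF Y k] B →
      (Pr (B ∩ (fun ω => (X (k + 1) ω, Y (k + 1) ω)) ⁻¹' A)).toReal =
        ∫ ω in B,
          (((Measure.pi fun j =>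
              Mker Q Q0 lam (etaTildeSeq ℓ p p' ε X Y η0 k ω) (X k ω j)).prod
            (Measure.pi fun _ : Fin N =>
              ℓ.withDensity fun x =>
                ENNReal.ofReal (etaTildeSeq ℓ p p' ε X Y η0 k ω x))) A).toReal ∂Pr

/-- An (isotropic) Gaussian transition-kernel density on `ℝ^d`. -/
def IsGaussianKernelDensity (p : Rd d → Rd d → ℝ) : Prop :=
  ∃ σ : ℝ, 0 < σ ∧ ∀ x y,
    p x y = (2 * Real.pi * σ ^ 2) ^ (-(d : ℝ) / 2) * Real.exp (-‖y - x‖ ^ 2 / (2 * σ ^ 2))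

/-- The measure `m P'` on `ℝ^d` (density formulation). -/
def measP' {E : Set (Rd d)} (ℓ : Measure (Rd d)) (p' : Rd d → Rd d → ℝ) (m : Measure E) :
    Measure (Rd d) :=
  ℓ.withDensity fun y => ENNReal.ofReal (∫ x, p' x.1 y ∂m)

/-- Distance on pairs `(m, η)`: TV distance plus TV distance of densities. -/
def pairDist {E : Set (Rd d)} (ℓ : Measure (Rd d)) (q q' : Measure E × (Rd d → ℝ)) : ℝ :=
  tvDist q.1 q'.1 + tvDen ℓ q.2 q'.2

/-- `Φ` has a unique fixed point in `P(E) × P*(ℝ^d)` (identifying measures having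
densities with their densities, hence up to `ℓ`-a.e. equality in the second coordinate). -/
def UniqueFixedPointProp {E : Set (Rd d)} (Q Q0 : Kernel E E) (lam : ℝ)
    (ℓ : Measure (Rd d)) (p p' : Rd d → Rd d → ℝ) (ε : ℝ) : Prop :=
  ∃ q : Measure E × (Rd d → ℝ),
    (IsProbabilityMeasure q.1 ∧ IsDensity ℓ q.2) ∧
    mStep Q Q0 lam q.2 q.1 = q.1 ∧ etaStep ℓ p p' ε q.1 q.2 =ᵐ[ℓ] q.2 ∧
    ∀ q' : Measure E × (Rd d → ℝ),
      (IsProbabilityMeasure q'.1 ∧ IsDensity ℓ q'.2) →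
      mStep Q Q0 lam q'.2 q'.1 = q'.1 → etaStep ℓ p p' ε q'.1 q'.2 =ᵐ[ℓ] q'.2 →
      q'.1 = q.1 ∧ q'.2 =ᵐ[ℓ] q.2

/-- `sup_{f ∈ B1(E)} E(|⟨m_n^N - q.1, f⟩| + ‖η_n^N - q.2‖_TV)` for the particle system. -/
def particleErr {E : Set (Rd d)} (ℓ : Measure (Rd d)) (p p' : Rd d → Rd d → ℝ) (ε : ℝ)
    {N : ℕ} {Ω : Type*} (mΩ : MeasurableSpace Ω) (Pr : @MeasureTheory.Measure Ω mΩ)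
    (X : ℕ → Ω → (Fin N → E)) (η0N : Rd d → ℝ)
    (q : Measure E × (Rd d → ℝ)) (n : ℕ) : ℝ :=
  ⨆ f : B1 E, ∫ ω,
    (|∫ x, f.1 x ∂(empMeas (X n ω)) - ∫ x, f.1 x ∂q.1| +
      tvDen ℓ (etaSeq ℓ p p' ε X η0N n ω) q.2) ∂Pr

/-- `sup_{f ∈ B1(E)} E(|⟨m̃_n^N - q.1, f⟩| + ‖η̃_n^N - q.2‖_TV)` for the particle scheme. -/
def schemeErr {E : Set (Rd d)} (ℓ : Measure (Rd d)) (p p' : Rd d → Rd d → ℝ) (ε : ℝ)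
    {N : ℕ} {Ω : Type*} (mΩ : MeasurableSpace Ω) (Pr : @MeasureTheory.Measure Ω mΩ)
    (X : ℕ → Ω → (Fin N → E)) (Y : ℕ → Ω → (Fin N → Rd d)) (η0 : Rd d → ℝ)
    (q : Measure E × (Rd d → ℝ)) (n : ℕ) : ℝ :=
  ⨆ f : B1 E, ∫ ω,
    (|∫ x, f.1 x ∂(empMeas (X n ω)) - ∫ x, f.1 x ∂q.1| +
      tvDen ℓ (etaTildeSeq ℓ p p' ε X Y η0 n ω) q.2) ∂Pr

/-! Doeblin's minorization argument. On a ball containing the compact set `E`, every density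
`p' x ·` with `x ∈ E` dominates a common positive constant, so `p' x · ≥ g₀` for an integrable `g₀`
with `0 < ∫ g₀ < 1`. This common part cancels in `m P' - m' P'`: for a test function `f` with
`|f| ≤ 1`, the function `x ↦ ∫ f (p' x ·)` differs from the constant `∫ f g₀` by at most the mass
`1 - ∫ g₀` of `p' x · - g₀`, and a test function oscillating by at most `a` around a constant
separates `m` and `m'` by at most `a · ‖m - m'‖_TV`. Hence `β = 1 - ∫ g₀`. -/

open Function

section TotalVariation

variable {S : Type*} [MeasurableSpace S]

lemma zero_mem_B1 : (fun _ : S => (0 : ℝ)) ∈ B1 S :=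
  ⟨measurable_const, fun _ => by simp⟩

instance : Nonempty (B1 S) := ⟨⟨_, zero_mem_B1⟩⟩

lemma integrable_of_mem_B1 (μ : Measure S) [IsFiniteMeasure μ] {f : S → ℝ} (hf : f ∈ B1 S) :
    Integrable f μ :=
  .of_bound hf.1.aestronglyMeasurable 1 (.of_forall hf.2)

lemma abs_integral_le_one_of_mem_B1 (μ : Measure S) [IsProbabilityMeasure μ] {f : S → ℝ}
    (hf : f ∈ B1 S) : |∫ x, f x ∂μ| ≤ 1 := by
  simpa using norm_integral_le_of_norm_le_const (μ := μ) (f := f) (.of_forall hf.2)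

lemma bddAbove_range_abs_integral_sub (μ ν : Measure S) [IsProbabilityMeasure μ]
    [IsProbabilityMeasure ν] :
    BddAbove (Set.range fun f : B1 S => |∫ x, (f : S → ℝ) x ∂μ - ∫ x, (f : S → ℝ) x ∂ν|) := by
  refine ⟨2, Set.forall_mem_range.2 fun f => ?_⟩
  have hμ := abs_integral_le_one_of_mem_B1 μ f.2
  have hν := abs_integral_le_one_of_mem_B1 ν f.2
  exact (abs_sub _ _).trans (by linarith)

lemma abs_integral_sub_integral_le_tvDist (μ ν : Measure S) [IsProbabilityMeasure μ]
    [IsProbabilityMeasure ν] {f : S → ℝ} (hf : f ∈ B1 S) :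
    |∫ x, f x ∂μ - ∫ x, f x ∂ν| ≤ tvDist μ ν :=
  le_ciSup (bddAbove_range_abs_integral_sub μ ν) ⟨f, hf⟩

/-- `g = a * h + c` with `h ∈ B1`. -/
lemma abs_integral_sub_integral_le_mul_tvDist (μ ν : Measure S) [IsProbabilityMeasure μ]
    [IsProbabilityMeasure ν] {g : S → ℝ} (hg : Measurable g) {c a : ℝ}
    (hga : ∀ x, |g x - c| ≤ a) :
    |∫ x, g x ∂μ - ∫ x, g x ∂ν| ≤ a * tvDist μ ν := by
  have : Nonempty S := nonempty_of_isProbabilityMeasure μ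
  have ha : 0 ≤ a := (abs_nonneg _).trans (hga (Classical.arbitrary S))
  set h : S → ℝ := fun x => a⁻¹ * (g x - c)
  have hh : h ∈ B1 S := by
    refine ⟨(hg.sub_const c).const_mul _, fun x => ?_⟩
    rw [abs_mul, abs_inv, abs_of_nonneg ha]
    exact inv_mul_le_one_of_le₀ (hga x) ha
  have hgh : g = fun x => a * h x + c := by
    funext x
    rcases ha.eq_or_lt with rfl | ha
    · simpa [sub_eq_zero] using hga x
    · simp [h, mul_inv_cancel_left₀ ha.ne']
  have hint : ∀ ρ : Measure S, IsProbabilityMeasure ρ →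
      ∫ x, g x ∂ρ = a * ∫ x, h x ∂ρ + c := fun ρ _ => by
    rw [hgh, integral_add ((integrable_of_mem_B1 ρ hh).const_mul a) (integrable_const c),
      integral_const_mul, integral_const, probReal_univ, one_smul]
  rw [hint μ ‹_›, hint ν ‹_›, add_sub_add_right_eq_sub, ← mul_sub, abs_mul, abs_of_nonneg ha]
  exact mul_le_mul_of_nonneg_left (abs_integral_sub_integral_le_tvDist μ ν hh) ha

end TotalVariation

lemma abs_integral_mul_sub_integral_mul_le {β : Type*} [MeasurableSpace β] {ℓ : Measure β}
    {q g₀ f : β → ℝ} (hq : ∫ y, q y ∂ℓ = 1) (hg₀ : Integrable g₀ ℓ) (hmin : ∀ y, g₀ y ≤ q y)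
    (hf : f ∈ B1 β) :
    |∫ y, q y * f y ∂ℓ - ∫ y, g₀ y * f y ∂ℓ| ≤ 1 - ∫ y, g₀ y ∂ℓ := by
  have hqi := integrable_of_integral_eq_one hq
  have hfm := hf.1.aestronglyMeasurable (μ := ℓ)
  rw [← integral_sub (hqi.mul_bdd hfm (.of_forall hf.2)) (hg₀.mul_bdd hfm (.of_forall hf.2)),
    ← hq, ← integral_sub hqi hg₀]
  refine norm_integral_le_of_norm_le (f := fun y => q y * f y - g₀ y * f y) (hqi.sub hg₀)
    (.of_forall fun y => ?_)
  rw [← sub_mul, norm_mul, Real.norm_of_nonneg (sub_nonneg.2 (hmin y))]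
  exact mul_le_of_le_one_right (sub_nonneg.2 (hmin y)) (hf.2 y)

section DoeblinContraction

variable {α β : Type*} [MeasurableSpace α] [MeasurableSpace β] {ℓ : Measure β} [SFinite ℓ]
  {k : α → β → ℝ}

lemma integrable_uncurry_prod (hk : Measurable (uncurry k)) (hk0 : ∀ x y, 0 ≤ k x y)
    (hk1 : ∀ x, ∫ y, k x y ∂ℓ = 1) (m : Measure α) [IsFiniteMeasure m] :
    Integrable (uncurry k) (m.prod ℓ) := by
  refine (integrable_prod_iff hk.aestronglyMeasurable).2
    ⟨.of_forall fun x => integrable_of_integral_eq_one (hk1 x), ?_⟩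
  have hnorm : ∀ x, ∫ y, ‖k x y‖ ∂ℓ = 1 := fun x => by
    simp_rw [Real.norm_of_nonneg (hk0 x _)]
    exact hk1 x
  simp only [uncurry_apply_pair, hnorm, integrable_const]

lemma integral_withDensity_integral_eq (hk : Measurable (uncurry k)) (hk0 : ∀ x y, 0 ≤ k x y)
    (hk1 : ∀ x, ∫ y, k x y ∂ℓ = 1) (m : Measure α) [IsFiniteMeasure m] {f : β → ℝ}
    (hf : f ∈ B1 β) :
    ∫ y, f y ∂(ℓ.withDensity fun y => ENNReal.ofReal (∫ x, k x y ∂m)) =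
      ∫ x, ∫ y, k x y * f y ∂ℓ ∂m := by
  have hu : Measurable fun y => ∫ x, k x y ∂m :=
    hk.stronglyMeasurable.integral_prod_left'.measurable
  have hkf : Integrable (uncurry fun x y => k x y * f y) (m.prod ℓ) :=
    (integrable_uncurry_prod hk hk0 hk1 m).mul_bdd (hf.1.comp measurable_snd).aestronglyMeasurable
      (.of_forall fun z => hf.2 z.2)
  rw [integral_withDensity_eq_integral_toReal_smul hu.ennreal_ofReal
    (.of_forall fun _ => ENNReal.ofReal_lt_top), integral_integral_swap hkf]
  congr 1 with y
  rw [ENNReal.toReal_ofReal (integral_nonneg fun x => hk0 x y), smul_eq_mul, integral_mul_const]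

theorem tvDist_withDensity_integral_le (hk : Measurable (uncurry k)) (hk0 : ∀ x y, 0 ≤ k x y)
    (hk1 : ∀ x, ∫ y, k x y ∂ℓ = 1) {g₀ : β → ℝ} (hg₀ : Integrable g₀ ℓ)
    (hmin : ∀ x y, g₀ y ≤ k x y) (m m' : Measure α) [IsProbabilityMeasure m]
    [IsProbabilityMeasure m'] :
    tvDist (ℓ.withDensity fun y => ENNReal.ofReal (∫ x, k x y ∂m))
        (ℓ.withDensity fun y => ENNReal.ofReal (∫ x, k x y ∂m')) ≤
      (1 - ∫ y, g₀ y ∂ℓ) * tvDist m m' := by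
  refine ciSup_le fun f => ?_
  rw [integral_withDensity_integral_eq hk hk0 hk1 m f.2,
    integral_withDensity_integral_eq hk hk0 hk1 m' f.2]
  exact abs_integral_sub_integral_le_mul_tvDist m m'
    (hk.mul (f.2.1.comp measurable_snd)).stronglyMeasurable.integral_prod_right'.measurable
    fun x => abs_integral_mul_sub_integral_mul_le (hk1 x) hg₀ (hmin x) f.2

end DoeblinContraction

lemma integral_gaussian_euclidean_eq_one {σ : ℝ} (hσ : 0 < σ) (x : Rd d) :
    ∫ y, (2 * π * σ ^ 2) ^ (-(d : ℝ) / 2) * rexp (-‖y - x‖ ^ 2 / (2 * σ ^ 2)) = 1 := by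
  have hb : 0 < (2 * σ ^ 2)⁻¹ := by positivity
  have hexp : ∀ v : Rd d, -‖v‖ ^ 2 / (2 * σ ^ 2) = -(2 * σ ^ 2)⁻¹ * ‖v‖ ^ 2 := fun v => by
    field_simp
  simp_rw [integral_const_mul, hexp]
  rw [integral_sub_right_eq_self (fun v : Rd d => rexp (-(2 * σ ^ 2)⁻¹ * ‖v‖ ^ 2)) x,
    GaussianFourier.integral_rexp_neg_mul_sq_norm hb, finrank_euclideanSpace_fin,
    show π / (2 * σ ^ 2)⁻¹ = 2 * π * σ ^ 2 by field_simp, ← Real.rpow_add (by positivity),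
    neg_div, neg_add_cancel, Real.rpow_zero]

namespace IsGaussianKernelDensity

variable {p : Rd d → Rd d → ℝ}

lemma isKernelDensity (hp : IsGaussianKernelDensity p) : IsKernelDensity volume p := by
  obtain ⟨σ, hσ, hp⟩ := hp
  refine ⟨?_, fun x y => by rw [hp]; positivity,
    fun x => by simp_rw [hp]; exact integral_gaussian_euclidean_eq_one hσ x⟩
  have : uncurry p = fun z : Rd d × Rd d =>
      (2 * π * σ ^ 2) ^ (-(d : ℝ) / 2) * rexp (-‖z.2 - z.1‖ ^ 2 / (2 * σ ^ 2)) :=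
    funext fun z => hp z.1 z.2
  rw [this]
  fun_prop

lemma exists_pos_le_of_mem_closedBall (hp : IsGaussianKernelDensity p) (R : ℝ) :
    ∃ c > 0, ∀ x ∈ Metric.closedBall (0 : Rd d) R, ∀ y ∈ Metric.closedBall (0 : Rd d) R,
      c ≤ p x y := by
  obtain ⟨σ, hσ, hp⟩ := hp
  refine ⟨(2 * π * σ ^ 2) ^ (-(d : ℝ) / 2) * rexp (-(2 * R) ^ 2 / (2 * σ ^ 2)), by positivity,
    fun x hx y hy => ?_⟩
  rw [mem_closedBall_zero_iff] at hx hy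
  have hxy : ‖y - x‖ ≤ 2 * R := (norm_sub_le y x).trans (by linarith)
  rw [hp]
  gcongr

/-- The witness is half the minimum of `p` on a ball around `E`, times the ball's indicator;
halving keeps its mass below `1 / 2`. -/
lemma exists_integrable_le (hp : IsGaussianKernelDensity p) {E : Set (Rd d)}
    (hE : Bornology.IsBounded E) (hne : E.Nonempty) :
    ∃ g₀ : Rd d → ℝ, Integrable g₀ ∧ 0 < ∫ y, g₀ y ∧ ∫ y, g₀ y < 1 ∧
      ∀ x ∈ E, ∀ y, g₀ y ≤ p x y := by
  obtain ⟨-, hp0, hp1⟩ := hp.isKernelDensity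
  obtain ⟨x₀, hx₀⟩ := hne
  obtain ⟨R, hR, hER⟩ := hE.subset_closedBall_lt 0 0
  obtain ⟨c, hc, hcp⟩ := hp.exists_pos_le_of_mem_closedBall R
  set S := Metric.closedBall (0 : Rd d) R
  have hS : MeasurableSet S := measurableSet_closedBall
  have hSfin : volume S ≠ ⊤ := measure_closedBall_lt_top.ne
  have hSpos : 0 < volume.real S :=
    ENNReal.toReal_pos (Metric.measure_closedBall_pos volume 0 hR).ne' hSfin
  have hmin : ∀ x ∈ E, ∀ y, S.indicator (fun _ => c) y ≤ p x y := fun x hx y => by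
    by_cases hy : y ∈ S
    · rw [Set.indicator_of_mem hy]
      exact hcp x (hER hx) y hy
    · rw [Set.indicator_of_notMem hy]
      exact hp0 x y
  have hmass : volume.real S * c ≤ 1 := by
    rw [← smul_eq_mul, ← integral_indicator_const c hS, ← hp1 x₀]
    exact integral_mono ((integrableOn_const hSfin).integrable_indicator hS)
      (integrable_of_integral_eq_one (hp1 x₀)) (hmin x₀ hx₀)
  refine ⟨S.indicator fun _ => c / 2, (integrableOn_const hSfin).integrable_indicator hS,
    ?_, ?_, fun x hx y =>
      (Set.indicator_le_indicator (s := S) (a := y) (half_le_self hc.le)).trans (hmin x hx y)⟩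
  all_goals rw [integral_indicator_const _ hS, smul_eq_mul]
  · positivity
  · linarith

end IsGaussianKernelDensity

theorem stmt18_general {d : ℕ}
    (E : Set (Rd d)) (hEc : IsCompact E) (hEi : (interior E).Nonempty)
    (p' : Rd d → Rd d → ℝ) (hgp' : IsGaussianKernelDensity p') :
    ∃ β : ℝ, β ∈ Set.Ioo (0 : ℝ) 1 ∧
      ∀ m m' : Measure E, IsProbabilityMeasure m → IsProbabilityMeasure m' →
        tvDist (measP' volume p' m) (measP' volume p' m') ≤ β * tvDist m m'  := by
  obtain ⟨hp, hp0, hp1⟩ := hgp'.isKernelDensity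
  obtain ⟨g₀, hg₀, hδ0, hδ1, hmin⟩ :=
    hgp'.exists_integrable_le hEc.isBounded (hEi.mono interior_subset)
  refine ⟨1 - ∫ y, g₀ y, ⟨by linarith, by linarith⟩, fun m m' _ _ => ?_⟩
  exact tvDist_withDensity_integral_le (k := fun (x : E) y => p' x y)
    (hp.comp (measurable_subtype_coe.prodMap measurable_id)) (fun x => hp0 x) (fun x => hp1 x)
    hg₀ (fun x => hmin x x.2) m m'

/-- **Lemma**: a Gaussian kernel `P'` is a TV-contraction on `P(E)` (Assumption (AG) implies (AP)(1)). -/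
theorem stmt18 {d : ℕ}
    (E : Set (Rd d)) (hEc : IsCompact E) (hEi : (interior E).Nonempty)
    (hEm : MeasurableSet E)
    (p' : Rd d → Rd d → ℝ) (hgp' : IsGaussianKernelDensity p') :
    ∃ β : ℝ, β ∈ Set.Ioo (0 : ℝ) 1 ∧
      ∀ m m' : Measure E, IsProbabilityMeasure m → IsProbabilityMeasure m' →
        tvDist (measP' volume p' m) (measP' volume p' m') ≤ β * tvDist m m' :=
  stmt18_general E hEc hEi p' hgp'
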